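/- Let L be a divisorial principally generated C-lattice lattice domain, let a ∈ L be a nonzero prime element, and let p be a maximal element of L with a ≤ p. Then ⋀ { b ∈ L | a ≤ b and b ≰ p } = 1; that is, a(p) = 1. -/

import Mathlib

/-!
In a lattice domain `(y : (y : e))` is the same for all nonzero principal `y ≤ e`, so for a
fixed nonzero principal `x ≤ a` divisoriality gives `(x : (x : e)) = e` for every `e ≥ x`:
`e ↦ (x : e)` is an order-reversing involution of `[x, 1]`. It sends the coatom `p` to an atom
`c = (x : p)` of `[x, 1]`, and a compact `κ ≤ c` with `κ ≰ x` then shows that `p` does not contain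
the meet of any downward directed family of elements `V ≥ x` with `V ≰ p`. The family of
`b ≥ a` with `b ≰ p` is downward directed since `p` is prime, so its meet `m` belongs to it.
For a principal `η ≤ m` with `η ≰ p`, minimality gives `η ≤ a ⊔ η²`, and join-principality
of `η` together with `(a : η) = a` turns this into `η ⊔ a = 1`, whence `m = 1`.
-/

/-- A multiplicative lattice: a complete lattice (bottom `⊥` playing the role of `0`)
which is a commutative monoid whose identity `1` is the top element, and in which
multiplication distributes over arbitrary joins. -/
class MulLattice (L : Type*) extends CompleteLattice L, CommMonoid L where
  one_eq_top : (1 : L) = ⊤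
  mul_sSup : ∀ (a : L) (S : Set L), a * sSup S = ⨆ b ∈ S, a * b

namespace MulLattice

variable {L : Type*} [MulLattice L]

/-- The residual `(y : x) = ⋁ {a | a * x ≤ y}`. -/
def res (y x : L) : L := sSup {a : L | a * x ≤ y}

/-- `x` is meet-principal: `y ⊓ z * x = ((y : x) ⊓ z) * x` for all `y, z`. -/
def IsMeetPrincipal (x : L) : Prop := ∀ y z : L, y ⊓ z * x = (res y x ⊓ z) * x

/-- `x` is join-principal: `y ⊔ (z : x) = ((y * x ⊔ z) : x)` for all `y, z`. -/
def IsJoinPrincipal (x : L) : Prop := ∀ y z : L, y ⊔ res z x = res (y * x ⊔ z) x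

/-- `x` is principal if it is both meet-principal and join-principal. -/
def IsPrincipal (x : L) : Prop := IsMeetPrincipal x ∧ IsJoinPrincipal x

/-- A prime element: a proper element `p` with `x * y ≤ p → x ≤ p ∨ y ≤ p`. -/
def IsPrime (p : L) : Prop := p ≠ 1 ∧ ∀ x y : L, x * y ≤ p → x ≤ p ∨ y ≤ p

/-- A maximal element: an element maximal in `L - {1}`. -/
def IsMaximal (m : L) : Prop := m ≠ 1 ∧ ∀ b : L, m < b → b = 1

end MulLattice

/-- Compact element, with the definition Mathlib used in December 2024: every cover of `k`
by a set `s` has a finite subcover. -/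
def CompleteLattice.IsCompactElement {α : Type*} [CompleteLattice α] (k : α) : Prop :=
  ∀ s : Set α, k ≤ sSup s → ∃ t : Finset α, ↑t ⊆ s ∧ k ≤ t.sup id

/-- A principally generated C-lattice: a multiplicative lattice in which `1` is compact,
compact elements are closed under multiplication, every element is a join of compact
elements and every element is a join of principal elements. -/
class PGCLattice (L : Type*) extends MulLattice L where
  top_isCompact : CompleteLattice.IsCompactElement (⊤ : L)
  compact_mul : ∀ a b : L, CompleteLattice.IsCompactElement a →
    CompleteLattice.IsCompactElement b → CompleteLattice.IsCompactElement (a * b)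
  compactly_generated : ∀ a : L,
    a = sSup {c : L | CompleteLattice.IsCompactElement c ∧ c ≤ a}
  principally_generated : ∀ a : L,
    a = sSup {x : L | MulLattice.IsPrincipal x ∧ x ≤ a}

namespace MulLattice

variable {L : Type*}

/-- A lattice domain: `0 = ⊥` is a prime element. -/
def IsLatticeDomain (L : Type*) [MulLattice L] : Prop := IsPrime (⊥ : L)

variable [PGCLattice L]

open Classical in
/-- The divisorial (`v`-)closure of `a`: equals `(x : (x : a))` for a nonzero principal
`x ≤ a` when such an `x` exists (in a lattice domain this is independent of the choice
of `x`), and `⊥` otherwise (in particular `vclos ⊥ = ⊥`). -/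
noncomputable def vclos (a : L) : L :=
  if h : ∃ x : L, IsPrincipal x ∧ x ≠ ⊥ ∧ x ≤ a then
    res h.choose (res h.choose a)
  else ⊥

/-- `a` is divisorial if `a = a_v`. -/
def IsDivisorial (a : L) : Prop := vclos a = a

/-- `L` is h-local: every nonzero prime is below a unique maximal element and
every nonzero element is below only finitely many maximal elements. -/
def IsHLocal (L : Type*) [PGCLattice L] : Prop :=
  (∀ r : L, r ≠ ⊥ → IsPrime r → ∃! m : L, IsMaximal m ∧ r ≤ m) ∧
  (∀ b : L, b ≠ ⊥ → {m : L | IsMaximal m ∧ b ≤ m}.Finite)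

end MulLattice

theorem CompleteLattice.IsCompactElement.exists_le_of_directedOn {α : Type*} [CompleteLattice α]
    {k : α} (hk : CompleteLattice.IsCompactElement k) {s : Set α} (hne : s.Nonempty)
    (hdir : DirectedOn (· ≤ ·) s) (hks : k ≤ sSup s) : ∃ t ∈ s, k ≤ t :=
  (CompleteLattice.isCompactElement_iff_le_of_directed_sSup_le α k).1
    ((CompleteLattice.isCompactElement_iff_exists_le_sSup_of_le_sSup α k).2 hk) s hne hdir hks

namespace MulLattice

section MulLattice

variable {L : Type*} [MulLattice L] {a p u v x y z : L}

instance : IsQuantale L where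
  mul_sSup_distrib := MulLattice.mul_sSup
  sSup_mul_distrib s y := by simp_rw [mul_comm _ y]; exact MulLattice.mul_sSup y s

protected theorem le_one (u : L) : u ≤ 1 := one_eq_top (L := L) ▸ le_top

theorem mul_le_left (a b : L) : a * b ≤ a := mul_le_of_le_one_right' (MulLattice.le_one b)

theorem mul_le_right (a b : L) : a * b ≤ b := mul_le_of_le_one_left' (MulLattice.le_one a)

theorem le_res_iff : a ≤ res y x ↔ a * x ≤ y := Quantale.leftMulResiduation_le_iff_mul_le

theorem res_mul_le (y x : L) : res y x * x ≤ y := le_res_iff.1 le_rfl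

theorem le_res_left (y x : L) : y ≤ res y x := le_res_iff.2 (mul_le_left y x)

theorem res_anti (y : L) (h : x ≤ u) : res y u ≤ res y x :=
  le_res_iff.2 ((mul_le_mul_right h _).trans (res_mul_le y u))

theorem res_eq_one_iff : res y x = 1 ↔ x ≤ y := by
  rw [one_eq_top, ← top_le_iff, ← one_eq_top, le_res_iff, one_mul]

theorem res_sSup (y : L) (S : Set L) : res y (sSup S) = ⨅ s ∈ S, res y s :=
  le_antisymm (le_iInf₂ fun _ hs => res_anti y (le_sSup hs)) <| le_res_iff.2 <| by
    rw [mul_sSup_distrib]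
    exact iSup₂_le fun s hs => le_res_iff.1 (biInf_le _ hs)

theorem IsPrime.res_eq_self (ha : IsPrime a) (h : ¬ u ≤ a) : res a u = a :=
  le_antisymm ((ha.2 _ _ (res_mul_le a u)).resolve_right h) (le_res_left a u)

theorem IsPrime.inf_le_iff (hp : IsPrime p) : u ⊓ v ≤ p ↔ u ≤ p ∨ v ≤ p :=
  ⟨fun h => hp.2 u v ((le_inf (mul_le_left u v) (mul_le_right u v)).trans h),
    fun h => h.elim inf_le_left.trans inf_le_right.trans⟩

theorem IsPrime.directedOn_ge (hp : IsPrime p) (a : L) :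
    DirectedOn (· ≥ ·) {b | a ≤ b ∧ ¬ b ≤ p} := fun u ⟨hau, hup⟩ v ⟨hav, hvp⟩ =>
  ⟨u ⊓ v, ⟨le_inf hau hav, by simp [hp.inf_le_iff, hup, hvp]⟩, inf_le_left, inf_le_right⟩

theorem IsMaximal.isPrime (hp : IsMaximal p) : IsPrime p := by
  refine ⟨hp.1, fun u v huv => or_iff_not_imp_left.2 fun hu => ?_⟩
  have hup : u ⊔ p = 1 := hp.2 _ (right_lt_sup.2 hu)
  calc v = v * (u ⊔ p) := by rw [hup, mul_one]
    _ = v * u ⊔ v * p := Quantale.mul_sup_distrib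
    _ ≤ p := sup_le (by rwa [mul_comm]) (mul_le_right v p)

theorem IsMeetPrincipal.res_mul_eq (hz : IsMeetPrincipal z) (h : u ≤ z) : res u z * z = u := by
  simpa [inf_eq_left.2 h, inf_eq_left.2 (MulLattice.le_one (res u z))] using (hz u 1).symm

end MulLattice

section Domain

variable {L : Type*} [MulLattice L] (hL : IsLatticeDomain L) {e u w x y z : L}
include hL

theorem res_bot_eq_bot (hz : z ≠ ⊥) : res ⊥ z = ⊥ :=
  le_bot_iff.1 <| (hL.2 _ z (res_mul_le ⊥ z)).resolve_right (mt le_bot_iff.1 hz)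

theorem IsJoinPrincipal.res_mul_cancel (hw : IsJoinPrincipal w) (hw0 : w ≠ ⊥) (z : L) :
    res (z * w) w = z := by
  simpa [res_bot_eq_bot hL hw0] using (hw z ⊥).symm

theorem IsJoinPrincipal.le_of_mul_le_mul_right (hw : IsJoinPrincipal w) (hw0 : w ≠ ⊥)
    (h : u * w ≤ y * w) : u ≤ y :=
  hw.res_mul_cancel hL hw0 y ▸ le_res_iff.2 h

theorem res_mul_eq_mul_res (hw : IsJoinPrincipal w) (hw0 : w ≠ ⊥) (hz : IsPrincipal z)
    (hz0 : z ≠ ⊥) (hwe : w ≤ e) : res (w * z) e = z * res w e := by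
  refine le_antisymm (sSup_le fun d (hd : d * e ≤ w * z) => ?_) (le_res_iff.2 ?_)
  · have hdz : d ≤ z := hw.le_of_mul_le_mul_right hL hw0 <| by
      rw [mul_comm z]; exact (mul_le_mul_right hwe d).trans hd
    rw [← hz.1.res_mul_eq hdz] at hd ⊢
    have : res d z * e ≤ w := hz.2.le_of_mul_le_mul_right hL hz0 (by rwa [mul_right_comm])
    rw [mul_comm z]
    exact mul_le_mul_left (le_res_iff.2 this) z
  · rw [mul_assoc, mul_comm w]
    exact mul_le_mul_right (res_mul_le w e) z

theorem res_mul_mul_cancel (hz : IsJoinPrincipal z) (hz0 : z ≠ ⊥) (w u : L) :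
    res (w * z) (z * u) = res w u := by
  refine eq_of_forall_le_iff fun d => ?_
  rw [le_res_iff, le_res_iff, ← mul_assoc, mul_right_comm]
  exact ⟨hz.le_of_mul_le_mul_right hL hz0, fun h => mul_le_mul_left h z⟩

theorem res_res_eq_res_res (hx : IsPrincipal x) (hx0 : x ≠ ⊥) (hxe : x ≤ e)
    (hy : IsPrincipal y) (hy0 : y ≠ ⊥) (hye : y ≤ e) :
    res x (res x e) = res y (res y e) :=
  calc res x (res x e) = res (x * y) (y * res x e) := (res_mul_mul_cancel hL hy.2 hy0 _ _).symm
    _ = res (y * x) (x * res y e) := by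
      rw [← res_mul_eq_mul_res hL hx.2 hx0 hy hy0 hxe, ← res_mul_eq_mul_res hL hy.2 hy0 hx hx0 hye,
        mul_comm]
    _ = res y (res y e) := res_mul_mul_cancel hL hx.2 hx0 _ _

end Domain

section PGCLattice

variable {L : Type*} [PGCLattice L] {a e m p v x : L}

theorem exists_principal_not_le (h : ¬ e ≤ v) : ∃ y, IsPrincipal y ∧ y ≤ e ∧ ¬ y ≤ v := by
  rw [PGCLattice.principally_generated e, sSup_le_iff] at h
  push Not at h
  simpa only [Set.mem_ofPred_eq, and_assoc] using h

theorem exists_compact_not_le (h : ¬ e ≤ v) :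
    ∃ y, CompleteLattice.IsCompactElement y ∧ y ≤ e ∧ ¬ y ≤ v := by
  rw [PGCLattice.compactly_generated e, sSup_le_iff] at h
  push Not at h
  simpa only [Set.mem_ofPred_eq, and_assoc] using h

theorem res_res_eq_of_isDivisorial (hL : IsLatticeDomain L)
    (he : IsDivisorial e) (hx : IsPrincipal x) (hx0 : x ≠ ⊥) (hxe : x ≤ e) :
    res x (res x e) = e := by
  have hex : ∃ y : L, IsPrincipal y ∧ y ≠ ⊥ ∧ y ≤ e := ⟨x, hx, hx0, hxe⟩
  obtain ⟨hy, hy0, hye⟩ := hex.choose_spec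
  rw [IsDivisorial, vclos, dif_pos hex] at he
  rw [res_res_eq_res_res hL hx hx0 hxe hy hy0 hye, he]

theorem eq_one_of_isLeast (ha : IsPrime a) (hp : IsPrime p) (hap : a ≤ p)
    (hm : IsLeast {b | a ≤ b ∧ ¬ b ≤ p} m) : m = 1 := by
  obtain ⟨⟨ham, hmp⟩, hmin⟩ := hm
  obtain ⟨η, hη, hηm, hηp⟩ := exists_principal_not_le hmp
  have hη2p : ¬ η * η ≤ p := fun h => hηp ((hp.2 η η h).elim id id)
  have hηle : η ≤ η * η ⊔ a := by
    rw [sup_comm]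
    exact hηm.trans (hmin ⟨le_sup_left, fun h => hη2p (le_sup_right.trans h)⟩)
  have hηa : η ⊔ a = 1 := by
    have := hη.2 η a
    rwa [ha.res_eq_self (fun h => hηp (h.trans hap)), res_eq_one_iff.2 hηle] at this
  exact le_antisymm (MulLattice.le_one m) (hηa ▸ sup_le hηm ham)

end PGCLattice

section Involution

variable {L : Type*} [PGCLattice L] {x p : L} (hinv : ∀ e, x ≤ e → res x (res x e) = e)
include hinv

theorem covBy_res_of_isMaximal (hp : IsMaximal p) (hxp : x ≤ p) : x ⋖ res x p := by
  have hpc : res x (res x p) = p := hinv p hxp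
  refine ⟨lt_of_le_not_ge (le_res_left x p) fun hcx => hp.1 ?_, fun W hxW hWc => ?_⟩
  · rw [← hpc, res_eq_one_iff.2 hcx]
  rcases (show p ≤ res x W from hpc ▸ res_anti x hWc.le).eq_or_lt with h | h
  · exact hWc.ne (by rw [← hinv W hxW.le, ← h])
  · exact hxW.not_ge (res_eq_one_iff.1 (hp.2 _ h))

theorem res_sSup_image_res {S : Set L} (hS : ∀ V ∈ S, x ≤ V) :
    res x (sSup ((res x ·) '' S)) = sInf S := by
  rw [res_sSup, iInf_image, sInf_eq_iInf]
  exact iInf_congr fun V => iInf_congr fun hV => hinv V (hS V hV)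

theorem not_sInf_le_of_directedOn (hp : IsMaximal p) (hxp : x ≤ p) {S : Set L}
    (hne : S.Nonempty) (hdir : DirectedOn (· ≥ ·) S) (hS : ∀ V ∈ S, x ≤ V ∧ ¬ V ≤ p) :
    ¬ sInf S ≤ p := by
  intro hSp
  have hxc : x ⋖ res x p := covBy_res_of_isMaximal hinv hp hxp
  have hdir' : DirectedOn (· ≤ ·) ((res x ·) '' S) := by
    rintro _ ⟨V₁, hV₁, rfl⟩ _ ⟨V₂, hV₂, rfl⟩
    obtain ⟨W, hW, h₁, h₂⟩ := hdir V₁ hV₁ V₂ hV₂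
    exact ⟨res x W, ⟨W, hW, rfl⟩, res_anti x h₁, res_anti x h₂⟩
  have hxD : x ≤ sSup ((res x ·) '' S) :=
    let ⟨V, hV⟩ := hne; (le_res_left x V).trans (le_sSup ⟨V, hV, rfl⟩)
  have hcD : res x p ≤ sSup ((res x ·) '' S) := by
    rw [← hinv _ hxD, res_sSup_image_res hinv fun V hV => (hS V hV).1, le_res_iff]
    exact (mul_le_mul_right hSp _).trans (res_mul_le x p)
  obtain ⟨κ, hκ, hκc, hκx⟩ := exists_compact_not_le hxc.lt.not_ge
  obtain ⟨_, ⟨V, hV, rfl⟩, hκV⟩ := hκ.exists_le_of_directedOn (hne.image _) hdir' (hκc.trans hcD)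
  have hxκ : x ⊔ κ = res x p := (hxc.eq_or_eq le_sup_left (sup_le hxc.le hκc)).resolve_left
    fun h => hκx (h ▸ le_sup_right)
  refine (hS V hV).2 ?_
  calc V = res x (res x V) := (hinv V (hS V hV).1).symm
    _ ≤ res x (x ⊔ κ) := res_anti x (sup_le (le_res_left x V) hκV)
    _ = p := by rw [hxκ, hinv p hxp]

end Involution

end MulLattice

open MulLattice

theorem stmt13 {L : Type*} [PGCLattice L] (hL : IsLatticeDomain L)
    (hdiv : ∀ a : L, IsDivisorial a)
    (a p : L) (ha0 : a ≠ ⊥) (ha : IsPrime a) (hp : IsMaximal p) (hap : a ≤ p) :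
    sInf {b : L | a ≤ b ∧ ¬ b ≤ p} = 1 := by
  obtain ⟨x, hx, hxa, hx0⟩ := exists_principal_not_le (mt le_bot_iff.1 ha0)
  have hinv : ∀ e, x ≤ e → res x (res x e) = e := fun e =>
    res_res_eq_of_isDivisorial hL (hdiv e) hx (mt (·.le) hx0)
  set T := {b : L | a ≤ b ∧ ¬ b ≤ p}
  rcases T.eq_empty_or_nonempty with hT | hT
  · rw [hT, sInf_empty, one_eq_top]
  have hmem : sInf T ∈ T := ⟨le_sInf fun b hb => hb.1,
    not_sInf_le_of_directedOn hinv hp (hxa.trans hap) hT (hp.isPrime.directedOn_ge a)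
      fun b hb => ⟨hxa.trans hb.1, hb.2⟩⟩
  exact eq_one_of_isLeast ha hp.isPrime hap ⟨hmem, fun b hb => sInf_le hb⟩
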